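/- arXiv:1402.6957 — 2 statements merged into one kernel-verified Lean document; each statement's English description precedes it below -/
import Mathlib

section
/- For each prime p let ℤ(p^∞) denote the Prüfer p-group, realized as the p-primary component of ℚ/ℤ. Then the abelian groups ℚ × ∏_p ℤ(p^∞) and ∏_p ℤ(p^∞), where the product ranges over all primes p, are isomorphic. -/
/-- The group `ℚ/ℤ`, the quotient of the rationals by the integers. -/
abbrev RatModInt : Type := ℚ ⧸ AddSubgroup.zmultiples (1 : ℚ)

/-- The Prüfer `p`-group `ℤ(p^∞)`, realized as the `p`-primary component of `ℚ/ℤ`,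
i.e. the subgroup of elements annihilated by some power of `p`. -/
def PruferGroup (p : Nat.Primes) : AddSubgroup RatModInt :=
  haveI : Fact p.1.Prime := ⟨p.2⟩
  AddCommGroup.primaryComponent RatModInt p.1

/-!
Let `G = ∏ₚ ℤ(p^∞)`. A primary component of a divisible group is divisible, so each `ℤ(p^∞)` is a
retract `ρₚ` of `ℚ/ℤ`. The map `f ↦ (ρₚ (∑ₙ fₙ p^-(n+1)))ₚ` from `ℚ^(ℕ)` to `G` is injective: for
`f ≠ 0` with top index `N` and `p` large, `∑ₙ fₙ p^-(n+1)` has `p`-adic norm `p^(N+1) > 1`, so `p`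
divides its denominator and `ρₚ` does not kill it. As `ℚ^(ℕ)` is divisible, hence injective,
`G ≅ ℚ^(ℕ) × K`, and `ℚ × ℚ^(ℕ) ≅ ℚ^(ℕ)` gives `ℚ × G ≅ G`.
-/

open AddCommGroup (primaryComponent)

namespace AddCommGroup.primaryComponent

variable {G : Type*} [AddCommGroup G] [DivisibleBy G ℤ] {p : ℕ} [hp : Fact p.Prime]

theorem surjective_nsmul {n : ℕ} (hn : n ≠ 0) :
    Function.Surjective fun x : primaryComponent G p => n • x := by
  rintro ⟨x, k, hk⟩
  obtain ⟨j, m, hpm, rfl⟩ := Nat.exists_eq_pow_mul_and_not_dvd hn p hp.out.ne_one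
  obtain ⟨z, hz⟩ : ∃ z : G, p ^ j • z = x :=
    ⟨DivisibleBy.div x ((p ^ j : ℕ) : ℤ), by
      rw [← natCast_zsmul, DivisibleBy.div_cancel x (by exact_mod_cast (pow_pos hp.out.pos j).ne')]⟩
  have hzp : z ∈ primaryComponent G p := ⟨j + k, by rw [pow_add, mul_nsmul, hz, hk]⟩
  obtain ⟨i, hi⟩ := mem_primaryComponent_iff_addOrderOf.mp hzp
  obtain ⟨c, hc⟩ := exists_nsmul_eq_self_of_coprime (x := z) (n := m)
    (hi ▸ Nat.Coprime.pow_right i ((Nat.Prime.coprime_iff_not_dvd hp.out).mpr hpm).symm)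
  refine ⟨⟨c • z, nsmul_mem hzp c⟩, Subtype.ext ?_⟩
  simp only [AddSubgroup.coe_nsmul]
  rw [mul_nsmul', smul_comm m c, hc, hz]

variable (G p) in
theorem exists_retraction :
    ∃ ρ : G →+ primaryComponent G p, ρ.comp (primaryComponent G p).subtype = .id _ :=
  letI := divisibleByOfSMulRightSurj (primaryComponent G p) ℕ surjective_nsmul
  letI := AddGroup.divisibleByIntOfDivisibleByNat (primaryComponent G p)
  (Module.Baer.of_divisible _).extension_property_addMonoidHom _ Subtype.val_injective _

end AddCommGroup.primaryComponent

theorem Module.Baer.of_module_rat (M : Type*) [AddCommGroup M] [Module ℚ M] : Module.Baer ℤ M :=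
  letI : DivisibleBy M ℤ :=
    { div x n := (n : ℚ)⁻¹ • x
      div_zero x := by simp
      div_cancel x hn := by
        rw [← Int.cast_smul_eq_zsmul ℚ, smul_smul, mul_inv_cancel₀ (by exact_mod_cast hn),
          one_smul] }
  Module.Baer.of_divisible M

namespace padicNorm

variable {p : ℕ} [Fact p.Prime]

theorem eq_one_of_not_dvd_num_den {q : ℚ} (hnum : ¬ (p : ℤ) ∣ q.num) (hden : ¬ p ∣ q.den) :
    padicNorm p q = 1 := by
  rw [← Rat.num_div_den q, padicNorm.div, (int_eq_one_iff _).mpr hnum,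
    (nat_eq_one_iff _).mpr hden, div_one]

theorem le_one_of_not_dvd_den {q : ℚ} (hden : ¬ p ∣ q.den) : padicNorm p q ≤ 1 := by
  rw [← Rat.num_div_den q, padicNorm.div, (nat_eq_one_iff _).mpr hden, div_one]
  exact padicNorm.of_int _

theorem dvd_den_of_one_lt {q : ℚ} (h : 1 < padicNorm p q) : p ∣ q.den := by
  by_contra hden
  exact (le_one_of_not_dvd_den hden).not_gt h

theorem inv_pow_self (n : ℕ) : padicNorm p ((p : ℚ) ^ n)⁻¹ = (p : ℚ) ^ n := by
  rw [IsAbsoluteValue.abv_inv (padicNorm p), IsAbsoluteValue.abv_pow (padicNorm p),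
    padicNorm_p_of_prime, inv_pow, inv_inv]

end padicNorm

open Finsupp in
theorem padicNorm_linearCombination_inv_pow {p : ℕ} [hp : Fact p.Prime] {f : ℕ →₀ ℚ} {N : ℕ}
    (hN : N ∈ f.support) (hmax : ∀ n ∈ f.support, n ≤ N) (hnum : ¬ (p : ℤ) ∣ (f N).num)
    (hden : ∀ n ∈ f.support, ¬ p ∣ (f n).den) :
    padicNorm p (linearCombination ℚ (fun n => ((p : ℚ) ^ (n + 1))⁻¹) f) = p ^ (N + 1) := by
  have hp1 : (1 : ℚ) < p := by exact_mod_cast hp.out.one_lt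
  have hlead : padicNorm p (f N • ((p : ℚ) ^ (N + 1))⁻¹) = p ^ (N + 1) := by
    rw [smul_eq_mul, padicNorm.mul, padicNorm.eq_one_of_not_dvd_num_den hnum (hden N hN),
      padicNorm.inv_pow_self, one_mul]
  have hrest : padicNorm p (∑ n ∈ f.support.erase N, f n • ((p : ℚ) ^ (n + 1))⁻¹) ≤ p ^ N := by
    refine padicNorm.sum_le' (fun n hn => ?_) (by positivity)
    have hnN : n + 1 ≤ N := (Finset.ne_of_mem_erase hn).lt_of_le
      (hmax n (Finset.mem_of_mem_erase hn))
    rw [smul_eq_mul, padicNorm.mul, padicNorm.inv_pow_self, ← one_mul ((p : ℚ) ^ N)]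
    exact mul_le_mul (padicNorm.le_one_of_not_dvd_den (hden n (Finset.mem_of_mem_erase hn)))
      (pow_le_pow_right₀ hp1.le hnN) (by positivity) zero_le_one
  have hlt : (p : ℚ) ^ N < p ^ (N + 1) := pow_lt_pow_right₀ hp1 N.lt_succ_self
  rw [linearCombination_apply, Finsupp.sum, ← Finset.add_sum_erase _ _ hN,
    padicNorm.add_eq_max_of_ne (by rw [hlead]; exact (hrest.trans_lt hlt).ne'), hlead,
    max_eq_left (hrest.trans hlt.le)]

open Finsupp in
theorem exists_prime_dvd_den_linearCombination_inv_pow {f : ℕ →₀ ℚ} (hf : f ≠ 0) :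
    ∃ p : Nat.Primes, (p : ℕ) ∣ (linearCombination ℚ (fun n => ((p : ℚ) ^ (n + 1))⁻¹) f).den := by
  have hsupp := support_nonempty_iff.mpr hf
  set N := f.support.max' hsupp
  have hN : N ∈ f.support := f.support.max'_mem hsupp
  set M := (f N).num.natAbs * ∏ n ∈ f.support, (f n).den
  have hM : 0 < M := Nat.pos_of_ne_zero <| mul_ne_zero
    (Int.natAbs_ne_zero.mpr (Rat.num_ne_zero.mpr (mem_support_iff.mp hN)))
    (Finset.prod_ne_zero_iff.mpr fun n _ => (f n).den_nz)
  obtain ⟨p, hMp, hp⟩ := Nat.exists_infinite_primes (M + 1)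
  have hpM : ¬ p ∣ M := fun h => by linarith [Nat.le_of_dvd hM h]
  have := Fact.mk hp
  refine ⟨⟨p, hp⟩, padicNorm.dvd_den_of_one_lt ?_⟩
  rw [padicNorm_linearCombination_inv_pow hN (fun n hn => f.support.le_max' n hn)
    (fun h => hpM (dvd_mul_of_dvd_left (Int.natCast_dvd.mp h) _))
    (fun n hn h => hpM <| dvd_mul_of_dvd_right
      (h.trans (Finset.dvd_prod_of_mem (fun n => (f n).den) hn)) _)]
  exact one_lt_pow₀ (by exact_mod_cast hp.one_lt) N.succ_ne_zero

theorem RatModInt.coe_eq_zero_iff {r : ℚ} : (r : RatModInt) = 0 ↔ ∃ k : ℤ, (k : ℚ) = r := by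
  simp [QuotientAddGroup.eq_zero_iff, AddSubgroup.mem_zmultiples_iff]

theorem RatModInt.retraction_coe_ne_zero {p : ℕ} [hp : Fact p.Prime]
    {ρ : RatModInt →+ primaryComponent RatModInt p}
    (hρ : ρ.comp (primaryComponent RatModInt p).subtype = .id _) {r : ℚ} (hr : p ∣ r.den) :
    ρ r ≠ 0 := by
  obtain ⟨m, hm⟩ := hr
  have hp0 : (p : ℚ) ≠ 0 := by exact_mod_cast hp.out.ne_zero
  have hm0 : (m : ℚ) ≠ 0 := by
    have := r.den_nz
    rw [hm] at this
    exact_mod_cast right_ne_zero_of_mul this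
  -- `m • r = r.num / p` has order `p`, so `ρ` fixes it; it is nonzero as `r.num` is prime to `p`.
  set y : RatModInt := ((r.num / p : ℚ) : RatModInt)
  have hy : m • (r : RatModInt) = y := by
    rw [← QuotientAddGroup.mk_nsmul, nsmul_eq_mul]
    congr 1
    conv_lhs => rw [← Rat.num_div_den r, hm]
    push_cast
    field_simp
  have hy_mem : y ∈ primaryComponent RatModInt p :=
    ⟨1, by
      rw [pow_one, ← QuotientAddGroup.mk_nsmul, nsmul_eq_mul, mul_div_cancel₀ _ hp0]
      exact RatModInt.coe_eq_zero_iff.mpr ⟨r.num, rfl⟩⟩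
  have hy0 : y ≠ 0 := by
    intro hy0
    obtain ⟨k, hk⟩ := RatModInt.coe_eq_zero_iff.mp hy0
    have hnum : (p : ℤ) ∣ r.num := ⟨k, by
      have : (r.num : ℚ) = p * k := by rw [hk]; field_simp
      exact_mod_cast this⟩
    have := Nat.dvd_gcd (Int.natCast_dvd.mp hnum) (Dvd.intro m hm.symm)
    rw [r.reduced] at this
    exact hp.out.not_dvd_one this
  intro h0
  apply hy0
  have hρy : (ρ y : RatModInt) = y := congrArg Subtype.val (DFunLike.congr_fun hρ ⟨y, hy_mem⟩)
  rw [← hρy, ← hy, map_nsmul, h0, smul_zero, ZeroMemClass.coe_zero]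

open Finsupp in
noncomputable def pruferEmbedding (ρ : ∀ p : Nat.Primes, RatModInt →+ PruferGroup p) :
    (ℕ →₀ ℚ) →+ ∀ p, PruferGroup p :=
  AddMonoidHom.pi fun p => (ρ p).comp <| (QuotientAddGroup.mk' _).comp
    (linearCombination ℚ fun n => ((p : ℚ) ^ (n + 1))⁻¹).toAddMonoidHom

theorem pruferEmbedding_injective {ρ : ∀ p : Nat.Primes, RatModInt →+ PruferGroup p}
    (hρ : ∀ p, (ρ p).comp (PruferGroup p).subtype = .id _) :
    Function.Injective (pruferEmbedding ρ) := by
  refine (injective_iff_map_eq_zero _).mpr fun f hf => ?_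
  by_contra hf0
  obtain ⟨p, hp⟩ := exists_prime_dvd_den_linearCombination_inv_pow hf0
  have := Fact.mk p.2
  exact RatModInt.retraction_coe_ne_zero (hρ p) hp (congr_fun hf p)

noncomputable def Finsupp.prodNatAddEquiv (M : Type*) [AddCommMonoid M] :
    M × (ℕ →₀ M) ≃+ (ℕ →₀ M) :=
  ({ Finsupp.optionEquiv with map_add' := fun f g => by ext <;> simp } :
    (Option ℕ →₀ M) ≃+ M × (ℕ →₀ M)).symm.trans (Finsupp.domCongr (Denumerable.eqv _))

theorem nonempty_prod_addEquiv_of_retraction {A V G : Type*} [AddCommGroup A] [AddCommGroup V]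
    [AddCommGroup G] (e : A × V ≃+ V) (i : V →+ G) (r : G →+ V) (hr : r.comp i = .id V) :
    Nonempty (A × G ≃+ G) := by
  let s := ((LinearMap.exact_map_mkQ_range i.toIntLinearMap).splitInjectiveEquiv
    (Submodule.mkQ_surjective _)
    ⟨r.toIntLinearMap, LinearMap.ext fun v => DFunLike.congr_fun hr v⟩).1
  exact ⟨((AddEquiv.refl A).prodCongr s.toAddEquiv).trans <| AddEquiv.prodAssoc.symm.trans <|
    (e.prodCongr (.refl _)).trans s.toAddEquiv.symm⟩

/-- `ℚ × ∏_p ℤ(p^∞)` is isomorphic to `∏_p ℤ(p^∞)`, the product ranging over all primes. -/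
theorem rat_prod_pi_prufer_equiv_pi_prufer_over_primes :
    Nonempty ((ℚ × ((p : Nat.Primes) → PruferGroup p)) ≃+
      ((p : Nat.Primes) → PruferGroup p)) := by
  choose ρ hρ using fun p : Nat.Primes =>
    have := Fact.mk p.2
    primaryComponent.exists_retraction RatModInt p.1
  obtain ⟨r, hr⟩ := (Module.Baer.of_module_rat (ℕ →₀ ℚ)).extension_property_addMonoidHom _
    (pruferEmbedding_injective hρ) (.id _)
  exact nonempty_prod_addEquiv_of_retraction (Finsupp.prodNatAddEquiv ℚ) _ r hr
end

section
/- For each prime p let ℤ(p^∞) denote the Prüfer p-group, realized as the p-primary component of ℚ/ℤ. Then the direct product ∏_p ℤ(p^∞), where p ranges over all primes, is isomorphic as an abelian group to the circle group 𝕋 = ℝ/ℤ. -/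
open Cardinal AddCommGroup IsDedekindDomain DirectSum

universe u

theorem Cardinal.mk_pi_eq_continuum {ι : Type u} [Countable ι] [Infinite ι] (β : ι → Type u)
    [∀ i, Countable (β i)] [∀ i, Nontrivial (β i)] : #(Π i, β i) = 𝔠 := by
  have hι : #ι = ℵ₀ := mk_eq_aleph0 ι
  rw [mk_pi]
  apply le_antisymm
  · calc prod (fun i => #(β i)) ≤ prod (fun _ : ι => ℵ₀) := prod_le_prod _ _ fun i => mk_le_aleph0
      _ = 𝔠 := by rw [prod_const, lift_id, lift_id, hι, aleph0_power_aleph0]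
  · calc 𝔠 = prod (fun _ : ι => (2 : Cardinal)) := by
          rw [prod_const, lift_id, lift_id, hι, two_power_aleph0]
      _ ≤ prod (fun i => #(β i)) := prod_le_prod _ _ fun i => two_le_iff.mpr (exists_pair_ne _)

theorem Cardinal.mk_eq_mk_prod_of_countable {T Q : Type u} [Countable T] (h : ℵ₀ < #(T × Q)) :
    #Q = #(T × Q) := by
  rw [mk_prod, lift_id, lift_id] at h ⊢
  have hT : #T ≠ 0 := by
    rintro hT
    simp [hT] at h
  have hQ : ℵ₀ ≤ #Q := by
    by_contra! hQ
    exact h.not_ge ((mul_le_mul' mk_le_aleph0 hQ.le).trans aleph0_mul_aleph0.le)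
  exact (mul_eq_right hQ (mk_le_aleph0.trans hQ) hT).symm

theorem Rat.nonempty_linearEquiv_of_mk_eq {V W : Type u} [AddCommGroup V] [Module ℚ V]
    [AddCommGroup W] [Module ℚ W] (hV : ℵ₀ < #V) (hVW : #V = #W) : Nonempty (V ≃ₗ[ℚ] W) := by
  have hrank (X : Type u) [AddCommGroup X] [Module ℚ X] (hX : ℵ₀ < #X) :
      Module.rank ℚ X = #X :=
    Module.Free.rank_eq_mk_of_infinite_lt ℚ X (by simpa using hX)
  exact nonempty_linearEquiv_of_rank_eq (by rw [hrank V hV, hrank W (hVW ▸ hV), hVW])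

namespace DivisibleHull

variable {M : Type*} [AddCommMonoid M]

theorem coe_surjective [DivisibleBy M ℕ] : Function.Surjective ((↑) : M → DivisibleHull M) := by
  intro x
  induction x with
  | mk m s =>
    exact ⟨DivisibleBy.div m (s : ℕ),
      mk_eq_mk.mpr ⟨1, by simp [DivisibleBy.div_cancel m s.ne_zero]⟩⟩

noncomputable def coeAddEquiv [IsAddTorsionFree M] [DivisibleBy M ℕ] : M ≃+ DivisibleHull M :=
  AddEquiv.ofBijective (coeAddMonoidHom M) ⟨coe_injective, coe_surjective⟩

end DivisibleHull

theorem AddSubgroup.nonempty_addEquiv_prod_quotient {A : Type*} [AddCommGroup A]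
    (T : AddSubgroup A) [DivisibleBy T ℤ] : Nonempty (A ≃+ T × (A ⧸ T)) := by
  obtain ⟨r, hr⟩ := (Module.Baer.of_divisible T).extension_property_addMonoidHom
    T.subtype Subtype.coe_injective (AddMonoidHom.id T)
  have hr' (t : T) : r t = t := DFunLike.congr_fun hr t
  refine ⟨AddEquiv.ofBijective (r.prod (QuotientAddGroup.mk' T)) ⟨?_, ?_⟩⟩
  · rw [injective_iff_map_eq_zero]
    intro a ha
    simp only [AddMonoidHom.prod_apply, Prod.mk_eq_zero, QuotientAddGroup.mk'_apply,
      QuotientAddGroup.eq_zero_iff] at ha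
    obtain ⟨hra, haT⟩ := ha
    simpa [hra] using (congrArg Subtype.val (hr' ⟨a, haT⟩)).symm
  · rintro ⟨t, q⟩
    obtain ⟨b, rfl⟩ := QuotientAddGroup.mk'_surjective T q
    refine ⟨t + b - r b, Prod.ext (by simp [hr']) ?_⟩
    refine QuotientAddGroup.eq_iff_sub_mem.mpr ?_
    simpa [add_sub_right_comm] using sub_mem t.2 (r b).2

namespace AddCommGroup

variable {G : Type*} [AddCommGroup G]

noncomputable instance torsion.divisibleBy [DivisibleBy G ℤ] : DivisibleBy (torsion G) ℤ :=
  divisibleByOfSMulRightSurj _ _ fun {n} hn t => by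
    obtain ⟨m, hm, hmt⟩ := isOfFinAddOrder_iff_zsmul_eq_zero.mp t.2
    refine ⟨⟨DivisibleBy.div (t : G) n, isOfFinAddOrder_iff_zsmul_eq_zero.mpr
      ⟨m * n, mul_ne_zero hm hn, ?_⟩⟩, Subtype.ext (DivisibleBy.div_cancel _ hn)⟩
    rw [mul_smul, DivisibleBy.div_cancel _ hn, hmt]

theorem mk_quotient_torsion {A : Type u} [AddCommGroup A] [DivisibleBy A ℤ]
    [Countable (torsion A)] (hA : ℵ₀ < #A) : #(A ⧸ torsion A) = #A := by
  obtain ⟨e⟩ := (torsion A).nonempty_addEquiv_prod_quotient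
  rw [mk_congr e.toEquiv] at hA ⊢
  exact mk_eq_mk_prod_of_countable hA

theorem nonempty_addEquiv_of_divisible_of_torsion {A B : Type u} [AddCommGroup A]
    [AddCommGroup B] [DivisibleBy A ℤ] [DivisibleBy B ℤ] [Countable (torsion A)]
    (hA : ℵ₀ < #A) (hAB : #A = #B) (e : torsion A ≃+ torsion B) : Nonempty (A ≃+ B) := by
  have : Countable (torsion B) := Countable.of_equiv _ e.toEquiv
  have := AddGroup.divisibleByNatOfDivisibleByInt A
  have := AddGroup.divisibleByNatOfDivisibleByInt B
  obtain ⟨eA⟩ := (torsion A).nonempty_addEquiv_prod_quotient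
  obtain ⟨eB⟩ := (torsion B).nonempty_addEquiv_prod_quotient
  -- `DivisibleHull` carries the `ℚ`-vector space structure of the torsion-free quotients
  let fA := DivisibleHull.coeAddEquiv (M := A ⧸ torsion A)
  let fB := DivisibleHull.coeAddEquiv (M := B ⧸ torsion B)
  have hfA : #(DivisibleHull (A ⧸ torsion A)) = #A := by
    rw [← mk_congr fA.toEquiv, mk_quotient_torsion hA]
  have hfB : #(DivisibleHull (B ⧸ torsion B)) = #B := by
    rw [← mk_congr fB.toEquiv, mk_quotient_torsion (hAB ▸ hA)]
  obtain ⟨g⟩ := Rat.nonempty_linearEquiv_of_mk_eq (hfA ▸ hA) (hfA.trans (hAB.trans hfB.symm))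
  exact ⟨eA.trans ((e.prodCongr (fA.trans (g.toAddEquiv.trans fB.symm))).trans eB.symm)⟩

theorem primaryComponent.exists_nsmul_eq [DivisibleBy G ℕ] {p : ℕ} [hp : Fact p.Prime] {n : ℕ}
    (hn : n ≠ 0) {x : G} (hx : x ∈ primaryComponent G p) :
    ∃ y ∈ primaryComponent G p, n • y = x := by
  obtain ⟨a, m, hpm, rfl⟩ := Nat.exists_eq_pow_mul_and_not_dvd hn p hp.out.ne_one
  set z := DivisibleBy.div x (p ^ a)
  have hz : p ^ a • z = x := DivisibleBy.div_cancel x (pow_ne_zero a hp.out.ne_zero)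
  have hzp : z ∈ primaryComponent G p := by
    obtain ⟨k, hk⟩ := hx
    exact ⟨k + a, by rw [pow_add, mul_nsmul', hz, hk]⟩
  obtain ⟨j, hj⟩ := mem_primaryComponent_iff_addOrderOf.mp hzp
  -- `m` is prime to the order `p ^ j` of `z`, so multiplication by `m` is invertible on `⟨z⟩`
  obtain ⟨c, hc⟩ := exists_nsmul_eq_self_of_coprime (x := z) (n := m) <| by
    rw [hj]
    exact (Nat.coprime_comm.mp (hp.out.coprime_iff_not_dvd.mpr hpm)).pow_right j
  refine ⟨c • z, nsmul_mem hzp c, ?_⟩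
  rw [mul_nsmul', nsmul_left_comm z c m, hc, hz]

noncomputable instance primaryComponent.divisibleBy [DivisibleBy G ℤ] {p : ℕ} [Fact p.Prime] :
    DivisibleBy (primaryComponent G p) ℤ :=
  have := AddGroup.divisibleByNatOfDivisibleByInt G
  have : DivisibleBy (primaryComponent G p) ℕ :=
    divisibleByOfSMulRightSurj _ _ fun hn x =>
      let ⟨y, hy, hyx⟩ := exists_nsmul_eq hn x.2
      ⟨⟨y, hy⟩, Subtype.ext hyx⟩
  AddGroup.divisibleByIntOfDivisibleByNat _

end AddCommGroup

theorem Ideal.toAddSubgroup_primaryComponent_span_natCast {G : Type*} [AddCommGroup G] (p : ℕ) :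
    (primaryComponent G (span {(p : ℤ)})).toAddSubgroup = AddCommGroup.primaryComponent G p := by
  ext x
  simp [primaryComponent_mem, span_singleton_pow, Ideal.span,
    Submodule.mem_torsionBy_iff, ← natCast_zsmul]

theorem IsDedekindDomain.HeightOneSpectrum.asIdeal_eq_span_primesEquiv
    (v : HeightOneSpectrum ℤ) :
    v.asIdeal = Ideal.span {((Rat.HeightOneSpectrum.primesEquiv v : ℕ) : ℤ)} := by
  have h : (Rat.IsIntegralClosure.intEquiv ℤ : ℤ →+* ℤ) = RingHom.id ℤ := Subsingleton.elim _ _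
  change _ = Ideal.span {(Rat.HeightOneSpectrum.natGenerator v : ℤ)}
  rw [Rat.HeightOneSpectrum.span_natGenerator, ← Ideal.map_coe, h, Ideal.map_id]

theorem AddCommGroup.isInternal_primaryComponent {G : Type*} [AddCommGroup G]
    (hG : IsAddTorsion G) : DirectSum.IsInternal (fun p : Nat.Primes => primaryComponent G p) := by
  let e := (Rat.HeightOneSpectrum.primesEquiv (R := ℤ)).symm
  have he (p : Nat.Primes) :
      Ideal.primaryComponent G (e p).asIdeal = (primaryComponent G p).toIntSubmodule := by
    rw [HeightOneSpectrum.asIdeal_eq_span_primesEquiv, Equiv.apply_symm_apply,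
      ← Ideal.toAddSubgroup_primaryComponent_span_natCast]
    rfl
  have hind := (Ideal.iSupIndep_primaryComponent ℤ G).comp e.injective
  have htop := Ideal.iSup_primaryComponent_eq_top (isAddTorsion_iff_isTorsion_int.mp hG)
  rw [← e.iSup_comp] at htop
  simp only [Function.comp_def, he] at hind htop
  exact DirectSum.isInternal_submodule_of_iSupIndep_of_iSup_eq_top hind htop

section PrimaryFamily

variable {H : Nat.Primes → Type*} [∀ p, AddCommGroup (H p)]

theorem DFinsupp.range_coeFnAddMonoidHom_eq_torsion
    (hH : ∀ p (x : H p), ∃ k, (p : ℕ) ^ k • x = 0) :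
    (DFinsupp.coeFnAddMonoidHom : (Π₀ p, H p) →+ Π p, H p).range = torsion (Π p, H p) := by
  classical
  apply le_antisymm
  · rintro _ ⟨f, rfl⟩
    induction f using DFinsupp.induction with
    | h0 => exact zero_mem _
    | ha p y f _ _ ih =>
      refine add_mem ?_ ih
      obtain ⟨k, hk⟩ := hH p y
      refine isOfFinAddOrder_iff_nsmul_eq_zero.mpr ⟨(p : ℕ) ^ k, pow_pos p.2.pos k, ?_⟩
      rw [← coe_smul, ← single_smul, hk, single_zero, coe_zero]
  · intro x hx
    obtain ⟨n, hn, hnx⟩ := isOfFinAddOrder_iff_nsmul_eq_zero.mp hx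
    -- a nonzero coordinate `x p` has order a positive power of `p`, which divides `n`
    have hsupp : {p | x p ≠ 0}.Finite := by
      refine Set.Finite.subset (s := ((↑) : Nat.Primes → ℕ) ⁻¹' n.divisors)
        (n.divisors.finite_toSet.preimage Nat.Primes.coe_nat_injective.injOn) ?_
      intro (p : Nat.Primes) hp
      obtain ⟨k, hk⟩ := hH p (x p)
      obtain ⟨j, -, hj⟩ := (Nat.dvd_prime_pow p.2).mp (addOrderOf_dvd_of_nsmul_eq_zero hk)
      have hj0 : j ≠ 0 := by
        rintro rfl
        exact hp (AddMonoid.addOrderOf_eq_one_iff.mp (by simpa using hj))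
      have hdvd : addOrderOf (x p) ∣ n := addOrderOf_dvd_of_nsmul_eq_zero (congrFun hnx p)
      exact Nat.mem_divisors.mpr ⟨(dvd_pow_self _ hj0).trans (hj ▸ hdvd), hn.ne'⟩
    refine ⟨DFinsupp.mk hsupp.toFinset fun p => x p, funext fun p => ?_⟩
    by_cases hp : x p = 0 <;> simp [hp]

noncomputable def AddCommGroup.torsionPiAddEquivDFinsupp
    (hH : ∀ p (x : H p), ∃ k, (p : ℕ) ^ k • x = 0) : torsion (Π p, H p) ≃+ Π₀ p, H p :=
  ((AddMonoidHom.ofInjective DFunLike.coe_injective).trans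
    (AddEquiv.addSubgroupCongr (DFinsupp.range_coeFnAddMonoidHom_eq_torsion hH))).symm

end PrimaryFamily

namespace AddCircle

theorem isAddTorsion_rat (p : ℚ) [Fact (0 < p)] : IsAddTorsion (AddCircle p) := by
  rintro ⟨a⟩
  exact isOfFinAddOrder_iff_exists_rat_eq_div.mpr ⟨a / p, Rat.cast_id _⟩

theorem mk_real_eq_continuum (p : ℝ) [hp : Fact (0 < p)] : #(AddCircle p) = 𝔠 := by
  rw [mk_congr (equivIco p 0), mk_Ico_real (by linarith [hp.out])]

variable (𝕜 : Type*) [Field 𝕜] [LinearOrder 𝕜] [IsStrictOrderedRing 𝕜]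

def ratCastHom : AddCircle (1 : ℚ) →+ AddCircle (1 : 𝕜) :=
  QuotientAddGroup.map _ _ (Rat.castHom 𝕜).toAddMonoidHom
    (AddSubgroup.zmultiples_le.mpr (by simp))

theorem ratCastHom_injective : Function.Injective (ratCastHom 𝕜) := by
  rw [injective_iff_map_eq_zero]
  rintro ⟨q⟩ hq
  obtain ⟨k, hk⟩ := (QuotientAddGroup.eq_zero_iff _).mp hq
  have hkq : (k : 𝕜) = q := by simpa using hk
  refine (QuotientAddGroup.eq_zero_iff _).mpr ⟨k, ?_⟩
  simpa using (by exact_mod_cast hkq : (k : ℚ) = q)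

theorem range_ratCastHom : (ratCastHom 𝕜).range = torsion (AddCircle (1 : 𝕜)) := by
  refine le_antisymm ?_ fun x hx => ?_
  · rw [AddMonoidHom.range_eq_map, ← torsion_eq_top_iff.mpr (isAddTorsion_rat 1)]
    exact map_torsion_le _
  · obtain ⟨a, rfl⟩ := QuotientAddGroup.mk_surjective x
    obtain ⟨q, hq⟩ := isOfFinAddOrder_iff_exists_rat_eq_div.mp hx
    exact ⟨q, by simp [ratCastHom, hq]⟩

noncomputable def ratAddEquivTorsion : AddCircle (1 : ℚ) ≃+ torsion (AddCircle (1 : 𝕜)) :=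
  (AddMonoidHom.ofInjective (ratCastHom_injective 𝕜)).trans
    (AddEquiv.addSubgroupCongr (range_ratCastHom 𝕜))

end AddCircle

instance : Countable RatModInt := Quotient.countable

noncomputable instance (p : Nat.Primes) : DivisibleBy (PruferGroup p) ℤ :=
  haveI : Fact p.1.Prime := ⟨p.2⟩
  primaryComponent.divisibleBy

instance (p : Nat.Primes) : Nontrivial (PruferGroup p) := by
  have : Fact p.1.Prime := ⟨p.2⟩
  have h : addOrderOf ((1 / p.1 : ℚ) : RatModInt) = p.1 := AddCircle.addOrderOf_period_div p.2.pos
  refine ⟨0, ⟨_, mem_primaryComponent_iff_addOrderOf.mpr ⟨1, by rw [h, pow_one]⟩⟩, fun h0 => ?_⟩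
  have h1 : ((1 / p.1 : ℚ) : RatModInt) = 0 := by simpa using (congrArg Subtype.val h0).symm
  rw [h1, addOrderOf_zero] at h
  exact p.2.one_lt.ne h

/-- The direct product `∏_p ℤ(p^∞)` over all primes is isomorphic to the circle group
`𝕋 = ℝ/ℤ`. -/
theorem pi_prufer_equiv_real_mod_int :
    Nonempty (((p : Nat.Primes) → PruferGroup p) ≃+
      (ℝ ⧸ AddSubgroup.zmultiples (1 : ℝ))) := by
  have eSum : (⨁ p, PruferGroup p) ≃+ RatModInt :=
    AddEquiv.ofBijective (DirectSum.coeAddMonoidHom _)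
      (isInternal_primaryComponent (AddCircle.isAddTorsion_rat 1))
  have hPrimary (p : Nat.Primes) (x : PruferGroup p) : ∃ k, (p : ℕ) ^ k • x = 0 :=
    let ⟨k, hk⟩ := x.2
    ⟨k, Subtype.ext hk⟩
  have eTorsion : torsion ((p : Nat.Primes) → PruferGroup p) ≃+ torsion (AddCircle (1 : ℝ)) :=
    (torsionPiAddEquivDFinsupp hPrimary).trans (eSum.trans (AddCircle.ratAddEquivTorsion ℝ))
  have : Countable (torsion ((p : Nat.Primes) → PruferGroup p)) :=
    Countable.of_equiv _ (eTorsion.trans (AddCircle.ratAddEquivTorsion ℝ).symm).symm.toEquiv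
  refine nonempty_addEquiv_of_divisible_of_torsion ?_ ?_ eTorsion
  · rw [mk_pi_eq_continuum]
    exact aleph0_lt_continuum
  · rw [mk_pi_eq_continuum, AddCircle.mk_real_eq_continuum]
end
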